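/- Let ω ∈ Ap(S) and let ω = Σ_{i=2}^ν λ_i g_i be a maximal representation of ω. Then λ_i ≤ β_i for each i = 2, …, ν. -/

import Mathlib

open Finset

/-- `S` is a numerical semigroup: a submonoid of `(ℕ, +)` with finite complement. -/
def IsNumSgp (S : Set ℕ) : Prop :=
  0 ∈ S ∧ (∀ a ∈ S, ∀ b ∈ S, a + b ∈ S) ∧ (Sᶜ : Set ℕ).Finite

/-- `s` belongs to the Apéry set of `S` with respect to `m`:
`s ∈ S` and `s - m ∉ S` (i.e. no `u ∈ S` with `u + m = s`). -/
def InApery (S : Set ℕ) (m s : ℕ) : Prop :=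
  s ∈ S ∧ ∀ u ∈ S, u + m ≠ s

def AperySet (S : Set ℕ) (m : ℕ) : Set ℕ := {s | InApery S m s}

/-- `ordS S s` is the largest `h` such that `s` is a sum of `h` nonzero elements of `S`. -/
noncomputable def ordS (S : Set ℕ) (s : ℕ) : ℕ :=
  sSup {h : ℕ | ∃ f : Fin h → ℕ, (∀ j, f j ∈ S ∧ f j ≠ 0) ∧ ∑ j, f j = s}

/-- `g` generates `S`. -/
def Generates (S : Set ℕ) {ν : ℕ} (g : Fin ν → ℕ) : Prop :=
  ∀ s, s ∈ S ↔ ∃ lam : Fin ν → ℕ, ∑ i, lam i * g i = s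

/-- `g` is a minimal generating system of `S`: it generates `S`
and no `g i` is generated by the remaining generators. -/
def MinimalGen (S : Set ℕ) {ν : ℕ} (g : Fin ν → ℕ) : Prop :=
  Generates S g ∧ ∀ i, ¬ ∃ lam : Fin ν → ℕ, lam i = 0 ∧ ∑ j, lam j * g j = g i

/-- `lam` is a maximal representation of `s`: the coefficient sum equals `ordS S s`. -/
def IsMaxRep (S : Set ℕ) {ν : ℕ} (g : Fin ν → ℕ) (lam : Fin ν → ℕ) (s : ℕ) : Prop :=
  ∑ i, lam i * g i = s ∧ ∑ i, lam i = ordS S s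

/-- `s` has a unique maximal representation. -/
def UniqueMaxRep (S : Set ℕ) {ν : ℕ} (g : Fin ν → ℕ) (s : ℕ) : Prop :=
  ∃! lam : Fin ν → ℕ, IsMaxRep S g lam s

/-- `β_i = max {h | h g_i ∈ Ap(S) and ord(h g_i) = h}`. -/
noncomputable def betaN (S : Set ℕ) (m : ℕ) {ν : ℕ} (g : Fin ν → ℕ) (i : Fin ν) : ℕ :=
  sSup {h : ℕ | InApery S m (h * g i) ∧ ordS S (h * g i) = h}

/-- `γ_i = max {h | h g_i ∈ Ap(S), ord(h g_i) = h and h g_i has a unique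
maximal representation}`. -/
noncomputable def gammaN (S : Set ℕ) (m : ℕ) {ν : ℕ} (g : Fin ν → ℕ) (i : Fin ν) : ℕ :=
  sSup {h : ℕ | InApery S m (h * g i) ∧ ordS S (h * g i) = h ∧ UniqueMaxRep S g (h * g i)}

/-- `B = {Σ_{i≥2} λ_i g_i : 0 ≤ λ_i ≤ β_i}`. -/
def Bset (S : Set ℕ) (m : ℕ) {ν : ℕ} [NeZero ν] (g : Fin ν → ℕ) : Set ℕ :=
  {s | ∃ lam : Fin ν → ℕ, lam 0 = 0 ∧ (∀ i, lam i ≤ betaN S m g i) ∧ ∑ i, lam i * g i = s}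

/-- `Γ = {Σ_{i≥2} λ_i g_i : 0 ≤ λ_i ≤ γ_i}`. -/
def GammaSet (S : Set ℕ) (m : ℕ) {ν : ℕ} [NeZero ν] (g : Fin ν → ℕ) : Set ℕ :=
  {s | ∃ lam : Fin ν → ℕ, lam 0 = 0 ∧ (∀ i, lam i ≤ gammaN S m g i) ∧ ∑ i, lam i * g i = s}

/-- `s ⪯_M t`. -/
def predM (S : Set ℕ) (s t : ℕ) : Prop :=
  ∃ u ∈ S, s + u = t ∧ ordS S s + ordS S u = ordS S t

/-- `ordS S s` is by definition `sSup {h | IsSumOfNonzero S s h}`. -/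
def IsSumOfNonzero (S : Set ℕ) (s h : ℕ) : Prop :=
  ∃ f : Fin h → ℕ, (∀ j, f j ∈ S ∧ f j ≠ 0) ∧ ∑ j, f j = s

section Order

variable {S : Set ℕ} {s t h k : ℕ}

theorem IsSumOfNonzero.le (hs : IsSumOfNonzero S s h) : h ≤ s := by
  obtain ⟨f, hf, rfl⟩ := hs
  calc h = ∑ _j : Fin h, 1 := by simp
    _ ≤ ∑ j, f j := sum_le_sum fun j _ => Nat.one_le_iff_ne_zero.2 (hf j).2

theorem IsSumOfNonzero.add (hs : IsSumOfNonzero S s h) (ht : IsSumOfNonzero S t k) :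
    IsSumOfNonzero S (s + t) (h + k) := by
  obtain ⟨f, hf, rfl⟩ := hs
  obtain ⟨f', hf', rfl⟩ := ht
  refine ⟨Fin.append f f', fun j => ?_, by simp [Fin.sum_univ_add]⟩
  refine Fin.addCases (fun j => ?_) (fun j => ?_) j <;> simp [hf, hf']

theorem isSumOfNonzero_mul {x : ℕ} (hx : x ∈ S) (hx0 : x ≠ 0) (k : ℕ) :
    IsSumOfNonzero S (k * x) k :=
  ⟨fun _ => x, fun _ => ⟨hx, hx0⟩, by simp⟩

theorem isSumOfNonzero_sum {ι : Type*} (g : ι → ℕ) (c : ι → ℕ) (u : Finset ι)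
    (hg : ∀ j ∈ u, g j ∈ S ∧ g j ≠ 0) :
    IsSumOfNonzero S (∑ j ∈ u, c j * g j) (∑ j ∈ u, c j) := by
  classical
  induction u using Finset.induction with
  | empty => exact ⟨Fin.elim0, fun j => j.elim0, by simp⟩
  | insert j u hj ih =>
    rw [sum_insert hj, sum_insert hj]
    obtain ⟨hgS, hg0⟩ := hg j (mem_insert_self j u)
    exact (isSumOfNonzero_mul hgS hg0 _).add (ih fun l hl => hg l (mem_insert_of_mem hl))

theorem isSumOfNonzero_of_mem (hs : s ∈ S) : ∃ h, IsSumOfNonzero S s h := by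
  rcases eq_or_ne s 0 with rfl | hs0
  · exact ⟨0, Fin.elim0, fun j => j.elim0, by simp⟩
  · exact ⟨1, by simpa using isSumOfNonzero_mul hs hs0 1⟩

theorem bddAbove_isSumOfNonzero : BddAbove {h | IsSumOfNonzero S s h} :=
  ⟨s, fun _ => IsSumOfNonzero.le⟩

theorem le_ordS (hs : IsSumOfNonzero S s h) : h ≤ ordS S s :=
  le_csSup bddAbove_isSumOfNonzero hs

theorem ordS_le : ordS S s ≤ s :=
  csSup_le' fun _ => IsSumOfNonzero.le

theorem isSumOfNonzero_ordS (hs : s ∈ S) : IsSumOfNonzero S s (ordS S s) :=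
  Nat.sSup_mem (isSumOfNonzero_of_mem hs) bddAbove_isSumOfNonzero

theorem ordS_add_le (hs : s ∈ S) (ht : t ∈ S) : ordS S s + ordS S t ≤ ordS S (s + t) :=
  le_ordS ((isSumOfNonzero_ordS hs).add (isSumOfNonzero_ordS ht))

end Order

section Generators

variable {S : Set ℕ} {ν : ℕ} {g : Fin ν → ℕ}

theorem Generates.sum_mem (hgen : Generates S g) (u : Finset (Fin ν)) (c : Fin ν → ℕ) :
    ∑ j ∈ u, c j * g j ∈ S := by
  classical
  exact (hgen _).2 ⟨fun j => if j ∈ u then c j else 0, by simp [ite_mul, sum_ite_mem]⟩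

theorem Generates.mem (hgen : Generates S g) (i : Fin ν) : g i ∈ S := by
  simpa using hgen.sum_mem {i} 1

theorem Generates.mul_mem (hgen : Generates S g) (c : ℕ) (i : Fin ν) : c * g i ∈ S := by
  simpa using hgen.sum_mem {i} fun _ => c

theorem MinimalGen.ne_zero (hmin : MinimalGen S g) (i : Fin ν) : g i ≠ 0 := fun hi =>
  hmin.2 i ⟨0, rfl, by simp [hi]⟩

/-- The other blocks contribute at least `Σ_{j ≠ i} λ_j` to the order, and the order is
superadditive, so `λ_i g_i` cannot have order above `λ_i`. -/
theorem ordS_coeff_mul_of_isMaxRep (hgen : Generates S g) (hg0 : ∀ j, g j ≠ 0)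
    {lam : Fin ν → ℕ} {ω : ℕ} (hrep : ∑ j, lam j * g j = ω) (hmax : ∑ j, lam j = ordS S ω)
    (i : Fin ν) : ordS S (lam i * g i) = lam i := by
  have hsplit : lam i * g i + ∑ j ∈ univ.erase i, lam j * g j = ω := by
    rw [add_sum_erase _ (fun j => lam j * g j) (mem_univ i), hrep]
  have hrest : ∑ j ∈ univ.erase i, lam j ≤ ordS S (∑ j ∈ univ.erase i, lam j * g j) :=
    le_ordS (isSumOfNonzero_sum g lam _ fun j _ => ⟨hgen.mem j, hg0 j⟩)
  have hsuper := hsplit ▸ ordS_add_le (hgen.mul_mem (lam i) i)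
    (hgen.sum_mem (univ.erase i) lam)
  have hlam : lam i + ∑ j ∈ univ.erase i, lam j = ordS S ω := by
    rw [add_sum_erase _ lam (mem_univ i), hmax]
  have hge : lam i ≤ ordS S (lam i * g i) := le_ordS (isSumOfNonzero_mul (hgen.mem i) (hg0 i) _)
  omega

end Generators

section Apery

variable {S : Set ℕ} {m : ℕ}

theorem InApery.of_add (hadd : ∀ a ∈ S, ∀ b ∈ S, a + b ∈ S) {a b : ℕ}
    (hab : InApery S m (a + b)) (ha : a ∈ S) (hb : b ∈ S) : InApery S m a :=
  ⟨ha, fun u hu hum => hab.2 (u + b) (hadd u hu b hb) (by omega)⟩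

theorem bddAbove_aperySet (hfin : (Sᶜ : Set ℕ).Finite) : BddAbove (AperySet S m) := by
  obtain ⟨N, hN⟩ := hfin.bddAbove
  refine ⟨N + m, fun s hs => ?_⟩
  by_contra! hlt
  exact hs.2 (s - m) (by_contra fun hsm => by have := hN hsm; omega) (by omega)

theorem le_betaN (hfin : (Sᶜ : Set ℕ).Finite) {ν : ℕ} (g : Fin ν → ℕ) (i : Fin ν) {h : ℕ}
    (hap : InApery S m (h * g i)) (hord : ordS S (h * g i) = h) : h ≤ betaN S m g i := by
  obtain ⟨N, hN⟩ := bddAbove_aperySet (m := m) hfin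
  refine le_csSup ⟨N, fun k hk => ?_⟩ ⟨hap, hord⟩
  calc k = ordS S (k * g i) := hk.2.symm
    _ ≤ k * g i := ordS_le
    _ ≤ N := hN hk.1

end Apery

theorem maxrep_coeff_le_beta_general (S : Set ℕ) {ν : ℕ} [NeZero ν] (g : Fin ν → ℕ)
    (hS : IsNumSgp S) (hgen : MinimalGen S g)
    (ω : ℕ) (hω : InApery S (g 0) ω) (lam : Fin ν → ℕ)
    (hrep : ∑ i, lam i * g i = ω) (hmaxrep : ∑ i, lam i = ordS S ω) :
    ∀ i : Fin ν, lam i ≤ betaN S (g 0) g i := by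
  intro i
  obtain ⟨-, hadd, hfin⟩ := hS
  have hsplit : lam i * g i + ∑ j ∈ univ.erase i, lam j * g j = ω := by
    rw [add_sum_erase _ (fun j => lam j * g j) (mem_univ i), hrep]
  have hap : InApery S (g 0) (lam i * g i) :=
    (hsplit ▸ hω).of_add hadd (hgen.1.mul_mem (lam i) i) (hgen.1.sum_mem (univ.erase i) lam)
  exact le_betaN hfin g i hap (ordS_coeff_mul_of_isMaxRep hgen.1 hgen.ne_zero hrep hmaxrep i)

theorem maxrep_coeff_le_beta (S : Set ℕ) {ν : ℕ} [NeZero ν] (g : Fin ν → ℕ) (hν : 2 ≤ ν)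
    (hS : IsNumSgp S) (hgen : MinimalGen S g) (hmono : StrictMono g)
    (hmpos : 0 < g 0) (hmul : ∀ s ∈ S, s ≠ 0 → g 0 ≤ s)
    (ω : ℕ) (hω : InApery S (g 0) ω) (lam : Fin ν → ℕ) (hlam0 : lam 0 = 0)
    (hrep : ∑ i, lam i * g i = ω) (hmaxrep : ∑ i, lam i = ordS S ω) :
    ∀ i : Fin ν, lam i ≤ betaN S (g 0) g i :=
  maxrep_coeff_le_beta_general S g hS hgen ω hω lam hrep hmaxrep
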